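/- Let k ∈ {1,…,D−1}, let 0 ≤ t_0 ≤ t < s, and let v be a trajectory of the consensus system defined on [t_0, s] such that G(u) satisfies Hypothesis 1 for all u ∈ [t_0, s]. Then Δ_{U_k}(s) ≤ Δ_N(t_0) − e^{−(m−α_k)(s−t)}·(Δ_N(t_0) − Δ_{U_k}(t)). -/

import Mathlib

open scoped Classical

/-- The pair `(SS_k, U_k)` of the hierarchical structure attached to the graph with
adjacency `ta` and root `r`:
`SS_0 = {r}`, `U_k = ⋃_{l ≤ k} SS_l`, `SS_{k+1} = {i | ∃ j ∈ SS_k, ta i j = 1} \ U_k`. -/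
noncomputable def hierSU {n : ℕ} (ta : Fin n → Fin n → ℝ) (r : Fin n) :
    ℕ → Finset (Fin n) × Finset (Fin n)
  | 0 => ({r}, {r})
  | k + 1 =>
      let p := hierSU ta r k
      let s := (Finset.univ.filter fun i => ∃ j ∈ p.1, ta i j = 1) \ p.2
      (s, p.2 ∪ s)

/-- `U_k`. -/
noncomputable def hierU {n : ℕ} (ta : Fin n → Fin n → ℝ) (r : Fin n) (k : ℕ) :
    Finset (Fin n) :=
  (hierSU ta r k).2

/-- `α_k = min_{i ∈ U_{k+1}} ∑_{j ∈ U_k} ta i j`. -/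
noncomputable def hierAlpha {n : ℕ} (ta : Fin n → Fin n → ℝ) (r : Fin n) (k : ℕ) : ℝ :=
  sInf ((fun i => ∑ j ∈ hierU ta r k, ta i j) '' ↑(hierU ta r (k + 1)))

/-- Hypothesis 1 (preservation of the hierarchical structure) for a graph with
adjacency `a`. -/
def HypOne {n : ℕ} (m D : ℕ) (ta : Fin n → Fin n → ℝ) (r : Fin n)
    (a : Fin n → Fin n → ℝ) : Prop :=
  (∀ i ∈ hierU ta r 1, a i r = 1) ∧
  ∀ k : ℕ, 1 ≤ k → k ≤ D - 1 → ∀ i ∈ hierU ta r (k + 1),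
    hierAlpha ta r k ≤ ∑ j ∈ hierU ta r k, a i j ∧
    ∑ j ∈ (hierU ta r k)ᶜ, a i j ≤ (m : ℝ) - hierAlpha ta r k

/-- Velocity diameter of the set `S` of agents. -/
noncomputable def sdiam {n d : ℕ} (S : Set (Fin n))
    (v : Fin n → EuclideanSpace ℝ (Fin d)) : ℝ :=
  sSup {x | ∃ i ∈ S, ∃ j ∈ S, x = ‖v i - v j‖}

/-!
Evaluating the velocities at a functional `g` of norm at most one turns the system into the
scalar system `p_i' = ∑_j a_ij (p_j - p_i)`. Where an agent maximises `p` over a set, its own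
term pushes it inward, so `max_N p` never increases and stays below `P = max_N p(t₀)`; an agent
maximal within `U_k` is pulled up only by its at most `m - α_k` neighbours outside `U_k`, so
`M = max_{U_k} p` satisfies `M' ≤ (m - α_k)(P - M)`, i.e. `P - M` decays at most at the rate
`m - α_k`. Adding the resulting bounds for `g` and `-g`, with `g` norming `v_i - v_j`, gives the
diameter estimate. The differential inequalities for maxima of finitely many functions come
from Mathlib's barrier comparison with right Dini derivatives.
-/

open Set Filter Topology Real

section FiniteMax

variable {ι : Type*} {T : Finset ι}

/-- Near `x` from the right, the maximum is attained only at indices that attain it at `x`. -/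
theorem Finset.eventually_slope_sup'_lt (hT : T.Nonempty) {f : ι → ℝ → ℝ} {f' : ι → ℝ}
    {x r : ℝ} (hf : ∀ i ∈ T, HasDerivAt (f i) (f' i) x)
    (hr : ∀ i ∈ T, f i x = T.sup' hT (f · x) → f' i < r) :
    ∀ᶠ z in 𝓝[>] x, slope (fun y => T.sup' hT (f · y)) x z < r := by
  obtain ⟨i₀, hi₀, hmax⟩ := T.exists_mem_eq_sup' hT (f · x)
  have hactive : ∀ j ∈ T, ∀ᶠ z in 𝓝[>] x,
      f j z = T.sup' hT (f · z) → f j x = T.sup' hT (f · x) ∧ slope (f j) x z < r := by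
    intro j hj
    by_cases hjx : f j x = T.sup' hT (f · x)
    · filter_upwards [(hf j hj).hasDerivWithinAt.limsup_slope_le' (lt_irrefl x)
        (hr j hj hjx)] with z hz _ using ⟨hjx, hz⟩
    · have hlt : f j x < f i₀ x := hmax ▸ lt_of_le_of_ne (T.le_sup' (f · x) hj) hjx
      filter_upwards [nhdsWithin_le_nhds
        ((hf j hj).continuousAt.eventually_lt (hf i₀ hi₀).continuousAt hlt)] with z hz hjz
      exact absurd (hjz ▸ T.le_sup' (f · z) hi₀) (not_le.2 hz)
  filter_upwards [(eventually_all_finset T).2 hactive] with z hz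
  obtain ⟨i, hi, hiz⟩ := T.exists_mem_eq_sup' hT (f · z)
  obtain ⟨hix, hslope⟩ := hz i hi hiz.symm
  rwa [slope_def_field, hiz, ← hix, ← slope_def_field]

theorem Finset.sup'_le_of_hasDerivAt_lt_deriv_boundary (hT : T.Nonempty) {f f' : ι → ℝ → ℝ}
    {a b : ℝ} {B B' : ℝ → ℝ}
    (hf : ∀ i ∈ T, ∀ x ∈ Set.Icc a b, HasDerivAt (f i) (f' i x) x)
    (hB : ∀ x, HasDerivAt B (B' x) x) (ha : T.sup' hT (f · a) ≤ B a)
    (bound : ∀ x ∈ Set.Ico a b, T.sup' hT (f · x) = B x →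
      ∀ i ∈ T, f i x = B x → f' i x < B' x) :
    ∀ x ∈ Set.Icc a b, T.sup' hT (f · x) ≤ B x := by
  have hactive : ∀ x, (T.filter fun i => f i x = T.sup' hT (f · x)).Nonempty := fun x =>
    let ⟨i, hi, hix⟩ := T.exists_mem_eq_sup' hT (f · x)
    ⟨i, Finset.mem_filter.2 ⟨hi, hix.symm⟩⟩
  refine fun x hx => image_le_of_liminf_slope_right_lt_deriv_boundary
    (f' := fun x => (T.filter fun i => f i x = T.sup' hT (f · x)).sup' (hactive x) (f' · x))
    (ContinuousOn.finset_sup'_apply hT fun i hi y hy =>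
      (hf i hi y hy).continuousAt.continuousWithinAt) (fun y hy r hr => ?_) ha hB
    (fun y hy hyB => ?_) hx
  · refine (T.eventually_slope_sup'_lt hT
      (fun i hi => hf i hi y (Set.Ico_subset_Icc_self hy)) fun i hi hiy => ?_).frequently
    exact (Finset.sup'_lt_iff _).1 hr i (Finset.mem_filter.2 ⟨hi, hiy⟩)
  · refine (Finset.sup'_lt_iff _).2 fun i hi => ?_
    obtain ⟨hiT, hiy⟩ := Finset.mem_filter.1 hi
    exact bound y hy hyB i hiT (hiy.trans hyB)

/-- A maximum of finitely many functions obeying `M' ≤ λ (P - M)` at maximisers stays below the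
solution of `B' = λ (P - B)`, `B(a) = M(a)`. -/
theorem Finset.sup'_le_sub_exp_mul_of_hasDerivAt_le (hT : T.Nonempty) {f f' : ι → ℝ → ℝ}
    {a b lam P : ℝ} (hlam : 0 ≤ lam)
    (hf : ∀ i ∈ T, ∀ x ∈ Set.Icc a b, HasDerivAt (f i) (f' i x) x)
    (bound : ∀ x ∈ Set.Ico a b, ∀ i ∈ T,
      (∀ j ∈ T, f j x ≤ f i x) → f' i x ≤ lam * (P - f i x)) :
    ∀ x ∈ Set.Icc a b,
      T.sup' hT (f · x) ≤ P - exp (-lam * (x - a)) * (P - T.sup' hT (f · a)) := by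
  set B : ℝ → ℝ := fun x => P - exp (-lam * (x - a)) * (P - T.sup' hT (f · a))
  have hB : ∀ x, HasDerivAt B (lam * (P - B x)) x := fun x => by
    have hlin : HasDerivAt (fun y => -lam * (y - a)) (-lam) x := by
      simpa using ((hasDerivAt_id x).sub_const a).const_mul (-lam)
    exact ((hlin.exp.mul_const _).const_sub P).congr_deriv (by ring)
  intro x hx
  -- the perturbation makes the barrier strictly faster than `f i` wherever they touch
  have hperturbed : ∀ ε > 0, T.sup' hT (f · x) ≤ B x + ε * (x - a) := by
    intro ε hε
    refine T.sup'_le_of_hasDerivAt_lt_deriv_boundary hT hf (a := a) (b := b)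
      (B := fun y => B y + ε * (y - a))
      (fun y => ((hB y).add (((hasDerivAt_id y).sub_const a).const_mul ε)).congr_deriv
        (by rw [mul_one])) (by simp [B]) (fun y hy hyB i hi hiy => ?_) x hx
    have hmax : ∀ j ∈ T, f j y ≤ f i y := fun j hj =>
      (T.le_sup' (f · y) hj).trans (hyB.trans hiy.symm).le
    have := bound y hy i hi hmax
    rw [hiy] at this
    nlinarith [mul_nonneg hlam (mul_nonneg hε.le (sub_nonneg.2 hy.1))]
  have hlim : Tendsto (fun ε => B x + ε * (x - a)) (𝓝[>] 0) (𝓝 (B x)) := by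
    have hcont := (tendsto_id (x := 𝓝 (0 : ℝ))).mul_const (x - a) |>.const_add (B x)
    rw [zero_mul, add_zero] at hcont
    exact hcont.mono_left nhdsWithin_le_nhds
  exact ge_of_tendsto hlim (eventually_nhdsWithin_of_forall hperturbed)

end FiniteMax

section Consensus

variable {ι : Type*} [Fintype ι] {a : ℝ → ι → ι → ℝ} {p : ι → ℝ → ℝ}

theorem HasDerivAt.dual_apply_sum_smul_sub {E : Type*} [NormedAddCommGroup E] [NormedSpace ℝ E]
    (g : StrongDual ℝ E) {v : ℝ → E} {c : ι → ℝ} {y : ι → E} {y₀ : E} {u : ℝ}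
    (hv : HasDerivAt v (∑ j, c j • (y j - y₀)) u) :
    HasDerivAt (fun w => g (v w)) (∑ j, c j * (g (y j) - g y₀)) u := by
  simpa [Function.comp_def] using g.hasFDerivAt.comp_hasDerivAt u hv

theorem consensus_le_sup'_initial [Nonempty ι] {t₀ s : ℝ}
    (ha : ∀ u ∈ Icc t₀ s, ∀ i j, 0 ≤ a u i j)
    (hp : ∀ i, ∀ u ∈ Icc t₀ s, HasDerivAt (p i) (∑ j, a u i j * (p j u - p i u)) u) :
    ∀ u ∈ Icc t₀ s, ∀ i, p i u ≤ Finset.univ.sup' Finset.univ_nonempty (p · t₀) := by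
  intro u hu i
  have hmax := Finset.univ.sup'_le_sub_exp_mul_of_hasDerivAt_le Finset.univ_nonempty le_rfl
    (fun i _ => hp i) (P := 0) (fun x hx i _ himax => by
      rw [zero_mul]
      exact Finset.sum_nonpos fun j _ => mul_nonpos_of_nonneg_of_nonpos
        (ha x (Ico_subset_Icc_self hx) i j) (sub_nonpos.2 (himax j (Finset.mem_univ j)))) u hu
  simpa using (Finset.univ.le_sup' (p · u) (Finset.mem_univ i)).trans hmax

theorem consensus_le_sub_exp_mul_of_sum_compl_le [DecidableEq ι] (S : Finset ι)
    (hS : S.Nonempty) {t s lam P : ℝ} (hlam : 0 ≤ lam)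
    (ha : ∀ u ∈ Icc t s, ∀ i j, 0 ≤ a u i j)
    (hp : ∀ i, ∀ u ∈ Icc t s, HasDerivAt (p i) (∑ j, a u i j * (p j u - p i u)) u)
    (hP : ∀ u ∈ Icc t s, ∀ j, p j u ≤ P)
    (hout : ∀ u ∈ Icc t s, ∀ i ∈ S, ∑ j ∈ Sᶜ, a u i j ≤ lam) :
    ∀ u ∈ Icc t s, ∀ i ∈ S,
      p i u ≤ P - exp (-lam * (u - t)) * (P - S.sup' hS (p · t)) := by
  refine fun u hu i hi => (S.le_sup' (p · u) hi).trans
    (S.sup'_le_sub_exp_mul_of_hasDerivAt_le hS hlam (fun i _ => hp i) ?_ u hu)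
  intro x hx i hi himax
  have hx := Ico_subset_Icc_self hx
  calc ∑ j, a x i j * (p j x - p i x)
      = ∑ j ∈ S, a x i j * (p j x - p i x) + ∑ j ∈ Sᶜ, a x i j * (p j x - p i x) :=
        (S.sum_add_sum_compl _).symm
    _ ≤ 0 + ∑ j ∈ Sᶜ, a x i j * (P - p i x) := by
        refine add_le_add (Finset.sum_nonpos fun j hj => ?_) (Finset.sum_le_sum fun j _ => ?_)
        · exact mul_nonpos_of_nonneg_of_nonpos (ha x hx i j) (sub_nonpos.2 (himax j hj))
        · exact mul_le_mul_of_nonneg_left (sub_le_sub_right (hP x hx j) _) (ha x hx i j)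
    _ = (∑ j ∈ Sᶜ, a x i j) * (P - p i x) := by rw [zero_add, Finset.sum_mul]
    _ ≤ lam * (P - p i x) :=
        mul_le_mul_of_nonneg_right (hout x hx i hi) (sub_nonneg.2 (hP x hx i))

end Consensus

section Diameter

variable {n d : ℕ}

theorem norm_sub_le_sdiam {S : Set (Fin n)} (w : Fin n → EuclideanSpace ℝ (Fin d)) {i j : Fin n}
    (hi : i ∈ S) (hj : j ∈ S) : ‖w i - w j‖ ≤ sdiam S w := by
  refine le_csSup (Set.Finite.bddAbove ?_) ⟨i, hi, j, hj, rfl⟩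
  refine (Set.finite_range fun q : Fin n × Fin n => ‖w q.1 - w q.2‖).subset ?_
  rintro _ ⟨i, -, j, -, rfl⟩
  exact ⟨(i, j), rfl⟩

theorem sdiam_le {S : Set (Fin n)} {w : Fin n → EuclideanSpace ℝ (Fin d)} {c : ℝ}
    (hS : S.Nonempty) (h : ∀ i ∈ S, ∀ j ∈ S, ‖w i - w j‖ ≤ c) : sdiam S w ≤ c := by
  obtain ⟨i, hi⟩ := hS
  refine csSup_le ⟨_, i, hi, i, hi, rfl⟩ ?_
  rintro _ ⟨i, hi, j, hj, rfl⟩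
  exact h i hi j hj

theorem sup'_add_sup'_neg_le_sdiam {S : Finset (Fin n)} (hS : S.Nonempty)
    (w : Fin n → EuclideanSpace ℝ (Fin d)) {g : StrongDual ℝ (EuclideanSpace ℝ (Fin d))}
    (hg : ‖g‖ ≤ 1) :
    S.sup' hS (fun i => g (w i)) + S.sup' hS (fun i => (-g) (w i)) ≤ sdiam ↑S w := by
  obtain ⟨i, hi, hgi⟩ := S.exists_mem_eq_sup' hS (fun i => g (w i))
  obtain ⟨j, hj, hgj⟩ := S.exists_mem_eq_sup' hS (fun i => (-g) (w i))
  calc S.sup' hS (fun i => g (w i)) + S.sup' hS (fun i => (-g) (w i)) = g (w i - w j) := by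
        rw [hgi, hgj, map_sub, neg_apply, sub_eq_add_neg]
    _ ≤ ‖g (w i - w j)‖ := le_abs_self _
    _ ≤ 1 * ‖w i - w j‖ := g.le_of_opNorm_le hg _
    _ ≤ sdiam ↑S w := by rw [one_mul]; exact norm_sub_le_sdiam w hi hj

theorem sdiam_le_of_forall_dual_le [Nonempty (Fin n)] {S : Finset (Fin n)} (hS : S.Nonempty)
    {w w₀ w₁ : Fin n → EuclideanSpace ℝ (Fin d)} {c : ℝ} (hc₀ : 0 ≤ c) (hc₁ : c ≤ 1)
    (h : ∀ g : StrongDual ℝ (EuclideanSpace ℝ (Fin d)), ∀ i ∈ S,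
      g (w i) ≤ Finset.univ.sup' Finset.univ_nonempty (fun j => g (w₀ j)) -
        c * (Finset.univ.sup' Finset.univ_nonempty (fun j => g (w₀ j)) -
          S.sup' hS (fun j => g (w₁ j)))) :
    sdiam ↑S w ≤ sdiam Set.univ w₀ - c * (sdiam Set.univ w₀ - sdiam ↑S w₁) := by
  refine sdiam_le (Finset.coe_nonempty.2 hS) fun i hi j hj => ?_
  obtain ⟨g, hg, hgw⟩ := exists_dual_vector'' ℝ (w i - w j)
  have hN := sup'_add_sup'_neg_le_sdiam Finset.univ_nonempty w₀ hg
  have hS' := sup'_add_sup'_neg_le_sdiam hS w₁ hg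
  rw [Finset.coe_univ] at hN
  have hi' := h g i hi
  have hj' := h (-g) j hj
  have hnorm : ‖w i - w j‖ = g (w i) + (-g) (w j) := by
    rw [← show g (w i - w j) = ‖w i - w j‖ from hgw, map_sub, neg_apply, sub_eq_add_neg]
  rw [hnorm]
  nlinarith [mul_le_mul_of_nonneg_left hN (sub_nonneg.2 hc₁), mul_le_mul_of_nonneg_left hS' hc₀]

end Diameter

section Hierarchy

variable {n m D k : ℕ} {ta : Fin n → Fin n → ℝ} {r : Fin n} {a : Fin n → Fin n → ℝ}

theorem hierU_subset_succ (k : ℕ) : hierU ta r k ⊆ hierU ta r (k + 1) := by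
  show (hierSU ta r k).2 ⊆ (hierSU ta r (k + 1)).2
  rw [hierSU]
  exact Finset.subset_union_left

theorem root_mem_hierU (k : ℕ) : r ∈ hierU ta r k := by
  induction k with
  | zero => simp [hierU, hierSU]
  | succ k ih => exact hierU_subset_succ k ih

theorem HypOne.sum_compl_le (h : HypOne m D ta r a) (hk₁ : 1 ≤ k) (hk₂ : k ≤ D - 1)
    {i : Fin n} (hi : i ∈ hierU ta r k) :
    ∑ j ∈ (hierU ta r k)ᶜ, a i j ≤ m - hierAlpha ta r k :=
  (h.2 k hk₁ hk₂ i (hierU_subset_succ k hi)).2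

theorem HypOne.hierAlpha_le (h : HypOne m D ta r a) (hk₁ : 1 ≤ k) (hk₂ : k ≤ D - 1)
    (ha : ∀ i j, 0 ≤ a i j) (hreg : ∀ i, ∑ j, a i j = m) : hierAlpha ta r k ≤ m :=
  calc hierAlpha ta r k ≤ ∑ j ∈ hierU ta r k, a r j :=
        (h.2 k hk₁ hk₂ r (root_mem_hierU _)).1
    _ ≤ ∑ j, a r j :=
        Finset.sum_le_sum_of_subset_of_nonneg (Finset.subset_univ _) fun j _ _ => ha r j
    _ = m := hreg r

end Hierarchy

theorem stmt7_general {n d : ℕ} (m D : ℕ)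
    (ta : Fin n → Fin n → ℝ)
    (r : Fin n)
    (a : ℝ → Fin n → Fin n → ℝ)
    (ha01 : ∀ t i j, a t i j = 0 ∨ a t i j = 1)
    (hreg : ∀ t i, ∑ j, a t i j = (m : ℝ))
    (v : ℝ → Fin n → EuclideanSpace ℝ (Fin d))
    (k : ℕ) (hk1 : 1 ≤ k) (hk2 : k ≤ D - 1)
    (t0 t s : ℝ) (ht : t0 ≤ t) (hts : t < s)
    (htraj : ∀ i : Fin n, ∀ u ∈ Set.Icc t0 s,
      HasDerivAt (fun w => v w i) (∑ j, a u i j • (v u j - v u i)) u)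
    (hhyp : ∀ u ∈ Set.Icc t0 s, HypOne m D ta r (a u)) :
    sdiam ↑(hierU ta r k) (v s) ≤
      sdiam Set.univ (v t0) -
        Real.exp (-((m : ℝ) - hierAlpha ta r k) * (s - t)) *
          (sdiam Set.univ (v t0) - sdiam ↑(hierU ta r k) (v t)) := by
  have : Nonempty (Fin n) := ⟨r⟩
  have ha : ∀ u i j, 0 ≤ a u i j := fun u i j => (ha01 u i j).elim (·.ge) (· ▸ zero_le_one)
  have hlam : 0 ≤ (m : ℝ) - hierAlpha ta r k := sub_nonneg.2
    ((hhyp t0 ⟨le_rfl, ht.trans hts.le⟩).hierAlpha_le hk1 hk2 (ha t0) (hreg t0))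
  have hexp_le_one : Real.exp (-((m : ℝ) - hierAlpha ta r k) * (s - t)) ≤ 1 :=
    Real.exp_le_one_iff.2
      (mul_nonpos_of_nonpos_of_nonneg (neg_nonpos.2 hlam) (sub_nonneg.2 hts.le))
  refine sdiam_le_of_forall_dual_le ⟨r, root_mem_hierU k⟩ (Real.exp_pos _).le hexp_le_one
    fun g i hi => ?_
  have hproj : ∀ i, ∀ u ∈ Icc t0 s, HasDerivAt (fun w => g (v w i))
      (∑ j, a u i j * (g (v u j) - g (v u i))) u :=
    fun i u hu => (htraj i u hu).dual_apply_sum_smul_sub g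
  have hP := consensus_le_sup'_initial (fun u _ => ha u) hproj
  exact consensus_le_sub_exp_mul_of_sum_compl_le _ _ hlam (fun u _ => ha u)
    (fun j u hu => hproj j u ⟨ht.trans hu.1, hu.2⟩) (fun u hu => hP u ⟨ht.trans hu.1, hu.2⟩)
    (fun u hu i hi => (hhyp u ⟨ht.trans hu.1, hu.2⟩).sum_compl_le hk1 hk2 hi) s
    ⟨hts.le, le_rfl⟩ i hi

/-- Lemma 9: under preservation of the hierarchical structure (Hypothesis 1),
for `k ∈ {1, …, D-1}` and times `0 ≤ t₀ ≤ t < s`,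
`Δ_{U_k}(s) ≤ Δ_N(t₀) - e^{-(m - α_k)(s - t)} (Δ_N(t₀) - Δ_{U_k}(t))`. -/
theorem stmt7 {n d : ℕ} (m D : ℕ) (hm : 1 ≤ m)
    (ta : Fin n → Fin n → ℝ) (hta : ∀ i j, ta i j = 0 ∨ ta i j = 1)
    (r : Fin n)
    (hspan : hierU ta r D = Finset.univ)
    (hdepth : ∀ k < D, hierU ta r k ≠ Finset.univ)
    (a : ℝ → Fin n → Fin n → ℝ)
    (ha01 : ∀ t i j, a t i j = 0 ∨ a t i j = 1)
    (hreg : ∀ t i, ∑ j, a t i j = (m : ℝ))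
    (v : ℝ → Fin n → EuclideanSpace ℝ (Fin d))
    (k : ℕ) (hk1 : 1 ≤ k) (hk2 : k ≤ D - 1)
    (t0 t s : ℝ) (ht0 : 0 ≤ t0) (ht : t0 ≤ t) (hts : t < s)
    (htraj : ∀ i : Fin n, ∀ u ∈ Set.Icc t0 s,
      HasDerivAt (fun w => v w i) (∑ j, a u i j • (v u j - v u i)) u)
    (hhyp : ∀ u ∈ Set.Icc t0 s, HypOne m D ta r (a u)) :
    sdiam ↑(hierU ta r k) (v s) ≤
      sdiam Set.univ (v t0) -
        Real.exp (-((m : ℝ) - hierAlpha ta r k) * (s - t)) *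
          (sdiam Set.univ (v t0) - sdiam ↑(hierU ta r k) (v t)) :=
  stmt7_general m D ta r a ha01 hreg v k hk1 hk2 t0 t s ht hts htraj hhyp
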